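/- Let ∇ be a Type B connection on M = (0,∞)×ℝ (Christoffel symbols Γ_{ij}^k = C_{ij}^k/x¹) whose Ricci tensor is not identically zero, and suppose ∇ admits an affine gradient Ricci soliton, i.e. there is a smooth function f on M with H(f)_{ij} + ρ^s_{ij} = 0 for all i,j. Then at least one of the following holds: (1) C₁₂¹ = 0, C₂₂¹ = 0, and C₂₂² = 0; (2) there exists a ∈ ℝ such that the function (x¹,x²) ↦ a·log(x¹) is an affine gradient Ricci soliton for ∇. -/

import Mathlib

noncomputable section

/-- The coordinate directions of ℝ². -/
def ee : Fin 2 → ℝ × ℝ := ![(1, 0), (0, 1)]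

/-- Partial derivative `∂_i f`. -/
def pd (i : Fin 2) (f : ℝ × ℝ → ℝ) : ℝ × ℝ → ℝ :=
  fun p => fderiv ℝ f p (ee i)

/-- The underlying manifold `M = (0,∞) × ℝ` of a Type B geometry. -/
def MB : Set (ℝ × ℝ) := {p | 0 < p.1}

/-- Christoffel symbols `Γ_{ij}^k = C_{ij}^k / x¹` of a Type B connection on `(0,∞)×ℝ`. -/
def GammaB (C : Fin 2 → Fin 2 → Fin 2 → ℝ) (i j k : Fin 2) : ℝ × ℝ → ℝ :=
  fun p => C i j k / p.1

/-- Ricci tensor of a Type B connection. -/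
def ricciB (C : Fin 2 → Fin 2 → Fin 2 → ℝ) (j k : Fin 2) : ℝ × ℝ → ℝ :=
  fun p => (∑ i, (pd i (GammaB C j k i) p - pd j (GammaB C i k i) p))
    + ∑ i, ∑ q, (GammaB C i q i p * GammaB C j k q p - GammaB C j q i p * GammaB C i k q p)

/-- Symmetrized Ricci tensor of a Type B connection. -/
def ricciSymB (C : Fin 2 → Fin 2 → Fin 2 → ℝ) (i j : Fin 2) : ℝ × ℝ → ℝ :=
  fun p => (ricciB C i j p + ricciB C j i p) / 2

/-- Hessian `H(f)_{ij} = ∂_i∂_j f − Σ_k Γ_{ij}^k ∂_k f` of a Type B connection. -/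
def hessB (C : Fin 2 → Fin 2 → Fin 2 → ℝ) (f : ℝ × ℝ → ℝ) (i j : Fin 2) : ℝ × ℝ → ℝ :=
  fun p => pd i (pd j f) p - ∑ k, GammaB C i j k p * pd k f p

/-- `f` is an affine gradient Ricci soliton for the Type B connection determined by `C`:
`H(f)_{ij} + ρ^s_{ij} = 0` on `M`. -/
def IsSolitonB (C : Fin 2 → Fin 2 → Fin 2 → ℝ) (f : ℝ × ℝ → ℝ) : Prop :=
  ∀ i j : Fin 2, ∀ p : ℝ × ℝ, 0 < p.1 → hessB C f i j p + ricciSymB C i j p = 0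

lemma MB_open : IsOpen MB := isOpen_Ioi.preimage continuous_fst

lemma ee0 : ee 0 = ((1:ℝ), (0:ℝ)) := rfl
lemma ee1 : ee 1 = ((0:ℝ), (1:ℝ)) := rfl

/-- `F` has partial derivatives `α, β` at `p`. -/
def HasPd (F : ℝ × ℝ → ℝ) (p : ℝ × ℝ) (α β : ℝ) : Prop :=
  ∃ L : ℝ × ℝ →L[ℝ] ℝ, HasFDerivAt F L p ∧ L (1, 0) = α ∧ L (0, 1) = β

lemma HasPd.pd0 {F p α β} (h : HasPd F p α β) : pd 0 F p = α := by
  obtain ⟨L, hL, h0, h1⟩ := h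
  rw [pd, hL.fderiv, ee0, h0]

lemma HasPd.pd1 {F p α β} (h : HasPd F p α β) : pd 1 F p = β := by
  obtain ⟨L, hL, h0, h1⟩ := h
  rw [pd, hL.fderiv, ee1, h1]

lemma hasPd_self {F : ℝ × ℝ → ℝ} {p} (h : DifferentiableAt ℝ F p) :
    HasPd F p (pd 0 F p) (pd 1 F p) :=
  ⟨fderiv ℝ F p, h.hasFDerivAt, rfl, rfl⟩

lemma pd_congr_on {s : Set (ℝ × ℝ)} (hs : IsOpen s) {p} (hp : p ∈ s) {F G : ℝ × ℝ → ℝ}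
    (h : ∀ q ∈ s, F q = G q) (i : Fin 2) : pd i F p = pd i G p := by
  unfold pd
  rw [Filter.EventuallyEq.fderiv_eq (Filter.eventuallyEq_of_mem (hs.mem_nhds hp) h)]

lemma hasPd_const (k : ℝ) (p : ℝ × ℝ) : HasPd (fun _ => k) p 0 0 :=
  ⟨0, hasFDerivAt_const k p, by simp, by simp⟩

lemma hasPd_lin {U V : ℝ × ℝ → ℝ} {p : ℝ × ℝ} {u0 u1 v0 v1 : ℝ}
    (hU : HasPd U p u0 u1) (hV : HasPd V p v0 v1) (P Q : ℝ) :
    HasPd (fun q => P * U q + Q * V q) p (P * u0 + Q * v0) (P * u1 + Q * v1) := by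
  obtain ⟨LU, hLU, hU0, hU1⟩ := hU
  obtain ⟨LV, hLV, hV0, hV1⟩ := hV
  exact ⟨P • LU + Q • LV, (hLU.const_mul P).add (hLV.const_mul Q), by simp [hU0, hV0],
    by simp [hU1, hV1]⟩

lemma hasPd_c_div_x {p : ℝ × ℝ} (hx : p.1 ≠ 0) (k : ℝ) :
    HasPd (fun q : ℝ × ℝ => k / q.1) p (-(k / (p.1 * p.1))) 0 := by
  have hinv : HasFDerivAt (fun q : ℝ × ℝ => (q.1)⁻¹)
      ((-(p.1 ^ 2)⁻¹ : ℝ) • ContinuousLinearMap.fst ℝ ℝ ℝ) p :=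
    (hasDerivAt_inv hx).comp_hasFDerivAt p hasFDerivAt_fst
  have h := hinv.const_mul k
  refine ⟨_, h.congr_of_eventuallyEq ?_, ?_, ?_⟩
  · filter_upwards with q; rw [div_eq_mul_inv, mul_comm]
  · simp [pow_two]; field_simp
  · simp

lemma hasPd_log {p : ℝ × ℝ} (hx : p.1 ≠ 0) (k : ℝ) :
    HasPd (fun q : ℝ × ℝ => k * Real.log q.1) p (k / p.1) 0 := by
  have hlog : HasFDerivAt (fun q : ℝ × ℝ => Real.log q.1)
      (((p.1)⁻¹ : ℝ) • ContinuousLinearMap.fst ℝ ℝ ℝ) p :=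
    (Real.hasDerivAt_log hx).comp_hasFDerivAt p hasFDerivAt_fst
  refine ⟨_, hlog.const_mul k, ?_, ?_⟩
  · simp [div_eq_mul_inv]
  · simp

lemma hasPd_master {U V : ℝ × ℝ → ℝ} {p : ℝ × ℝ} (hx : p.1 ≠ 0) {u0 u1 v0 v1 : ℝ}
    (hU : HasPd U p u0 u1) (hV : HasPd V p v0 v1) (P Q k1 k2 : ℝ) :
    HasPd (fun q => (P * U q + Q * V q + k1) / q.1 + k2 / (q.1 * q.1)) p
      ((P * u0 + Q * v0) / p.1 - (P * U p + Q * V p + k1) / (p.1 * p.1)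
        - 2 * k2 / (p.1 * p.1 * p.1))
      ((P * u1 + Q * v1) / p.1) := by
  obtain ⟨LU, hLU, hU0, hU1⟩ := hU
  obtain ⟨LV, hLV, hV0, hV1⟩ := hV
  have hW : HasFDerivAt (fun q => P * U q + Q * V q + k1) (P • LU + Q • LV) p :=
    ((hLU.const_mul P).add (hLV.const_mul Q)).add_const k1
  have hinv : HasFDerivAt (fun q : ℝ × ℝ => (q.1)⁻¹)
      ((-(p.1 ^ 2)⁻¹ : ℝ) • ContinuousLinearMap.fst ℝ ℝ ℝ) p :=
    (hasDerivAt_inv hx).comp_hasFDerivAt p hasFDerivAt_fst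
  have h1 := hW.mul hinv
  have hsq : HasFDerivAt (fun q : ℝ × ℝ => q.1 * q.1)
      ((p.1 : ℝ) • ContinuousLinearMap.fst ℝ ℝ ℝ + (p.1 : ℝ) • ContinuousLinearMap.fst ℝ ℝ ℝ) p :=
    hasFDerivAt_fst.mul hasFDerivAt_fst
  have hinv2 : HasFDerivAt (fun q : ℝ × ℝ => (q.1 * q.1)⁻¹)
      (((-((p.1 * p.1) ^ 2)⁻¹ : ℝ)) • ((p.1 : ℝ) • ContinuousLinearMap.fst ℝ ℝ ℝ
        + (p.1 : ℝ) • ContinuousLinearMap.fst ℝ ℝ ℝ)) p :=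
    (hasDerivAt_inv (mul_ne_zero hx hx)).comp_hasFDerivAt p hsq
  have h2 := hinv2.const_mul k2
  have h3 := h1.add h2
  refine ⟨_, h3.congr_of_eventuallyEq ?_, ?_, ?_⟩
  · filter_upwards with q
    simp only [div_eq_mul_inv]; rfl
  · simp [hU0, hV0, pow_two]; field_simp; ring
  · simp [hU1, hV1]; rw [div_eq_mul_inv]; ring


lemma pd_contDiffOn {F : ℝ × ℝ → ℝ} (h : ContDiffOn ℝ (⊤ : ℕ∞) F MB) (i : Fin 2) :
    ContDiffOn ℝ (⊤ : ℕ∞) (pd i F) MB :=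
  (h.fderiv_of_isOpen MB_open (by simp)).clm_apply contDiffOn_const

lemma diffAt_of {F : ℝ × ℝ → ℝ} (h : ContDiffOn ℝ (⊤ : ℕ∞) F MB) {p} (hp : p ∈ MB) :
    DifferentiableAt ℝ F p :=
  (h.differentiableOn (by simp)).differentiableAt (MB_open.mem_nhds hp)

lemma clairaut {F : ℝ × ℝ → ℝ} (hF : ContDiffOn ℝ (⊤ : ℕ∞) F MB) {p} (hp : p ∈ MB) :
    pd 0 (pd 1 F) p = pd 1 (pd 0 F) p := by
  have hsym : IsSymmSndFDerivAt ℝ F p :=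
    (hF.contDiffAt (MB_open.mem_nhds hp)).isSymmSndFDerivAt (by rw [minSmoothness_of_isRCLikeNormedField]; exact WithTop.coe_le_coe.mpr le_top)
  have hdF : DifferentiableAt ℝ (fderiv ℝ F) p :=
    ((hF.fderiv_of_isOpen (m := 1) MB_open (by exact WithTop.coe_le_coe.mpr le_top)).differentiableOn one_ne_zero).differentiableAt
      (MB_open.mem_nhds hp)
  have key : ∀ i j : Fin 2, pd i (pd j F) p = fderiv ℝ (fderiv ℝ F) p (ee i) (ee j) := by
    intro i j
    have h2 : pd j F = fun q => (fderiv ℝ F q) (ee j) := rfl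
    rw [pd, h2, fderiv_clm_apply hdF (differentiableAt_const _)]
    simp
  rw [key 0 1, key 1 0, hsym.eq]


lemma pd0_div {p : ℝ × ℝ} (hx : p.1 ≠ 0) (m : ℝ) :
    pd 0 (fun q : ℝ × ℝ => m / q.1) p = -(m / (p.1 * p.1)) := (hasPd_c_div_x hx m).pd0

lemma pd1_div {p : ℝ × ℝ} (hx : p.1 ≠ 0) (m : ℝ) :
    pd 1 (fun q : ℝ × ℝ => m / q.1) p = 0 := (hasPd_c_div_x hx m).pd1

lemma pdG0 {C : Fin 2 → Fin 2 → Fin 2 → ℝ} {p : ℝ × ℝ} (hx : p.1 ≠ 0) (j k l : Fin 2) :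
    pd 0 (GammaB C j k l) p = -(C j k l / (p.1 * p.1)) := (hasPd_c_div_x hx (C j k l)).pd0

lemma pdG1 {C : Fin 2 → Fin 2 → Fin 2 → ℝ} {p : ℝ × ℝ} (hx : p.1 ≠ 0) (j k l : Fin 2) :
    pd 1 (GammaB C j k l) p = 0 := (hasPd_c_div_x hx (C j k l)).pd1

section ricci
variable {C : Fin 2 → Fin 2 → Fin 2 → ℝ} {p : ℝ × ℝ}

lemma ricci00 (hC : ∀ i j k, C i j k = C j i k) (hx : p.1 ≠ 0) : ricciB C 0 0 p =
    (C 0 1 1 - C 0 1 1^2 + C 0 0 1 * C 1 1 1 - C 0 0 1 * C 0 1 0 + C 0 0 0 * C 0 1 1)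
      / (p.1 * p.1) := by
  simp only [ricciB, Fin.sum_univ_two, pdG0 hx, pdG1 hx, GammaB, hC 1 0]
  field_simp
  ring

lemma ricci01 (hC : ∀ i j k, C i j k = C j i k) (hx : p.1 ≠ 0) : ricciB C 0 1 p =
    (C 1 1 1 + C 0 1 0 * C 0 1 1 - C 0 0 1 * C 1 1 0) / (p.1 * p.1) := by
  simp only [ricciB, Fin.sum_univ_two, pdG0 hx, pdG1 hx, GammaB, hC 1 0]
  field_simp
  ring

lemma ricci10 (hC : ∀ i j k, C i j k = C j i k) (hx : p.1 ≠ 0) : ricciB C 1 0 p =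
    (-C 0 1 0 + C 0 1 0 * C 0 1 1 - C 0 0 1 * C 1 1 0) / (p.1 * p.1) := by
  simp only [ricciB, Fin.sum_univ_two, pdG0 hx, pdG1 hx, GammaB, hC 1 0]
  field_simp
  ring

lemma ricci11 (hC : ∀ i j k, C i j k = C j i k) (hx : p.1 ≠ 0) : ricciB C 1 1 p =
    (-C 1 1 0 - C 0 1 1 * C 1 1 0 + C 0 1 0 * C 1 1 1 - C 0 1 0^2 + C 0 0 0 * C 1 1 0)
      / (p.1 * p.1) := by
  simp only [ricciB, Fin.sum_univ_two, pdG0 hx, pdG1 hx, GammaB, hC 1 0]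
  field_simp
  ring

lemma ricciSym00 (hC : ∀ i j k, C i j k = C j i k) (hx : p.1 ≠ 0) : ricciSymB C 0 0 p =
    (C 0 1 1 - C 0 1 1^2 + C 0 0 1 * C 1 1 1 - C 0 0 1 * C 0 1 0 + C 0 0 0 * C 0 1 1)
      / (p.1 * p.1) := by
  simp only [ricciSymB, ricci00 hC hx]; ring

lemma ricciSym01 (hC : ∀ i j k, C i j k = C j i k) (hx : p.1 ≠ 0) : ricciSymB C 0 1 p =
    ((C 1 1 1 - C 0 1 0)/2 + C 0 1 0 * C 0 1 1 - C 0 0 1 * C 1 1 0) / (p.1 * p.1) := by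
  simp only [ricciSymB, ricci01 hC hx, ricci10 hC hx]; field_simp; ring

lemma ricciSym10 (hC : ∀ i j k, C i j k = C j i k) (hx : p.1 ≠ 0) : ricciSymB C 1 0 p =
    ((C 1 1 1 - C 0 1 0)/2 + C 0 1 0 * C 0 1 1 - C 0 0 1 * C 1 1 0) / (p.1 * p.1) := by
  simp only [ricciSymB, ricci01 hC hx, ricci10 hC hx]; field_simp; ring

lemma ricciSym11 (hC : ∀ i j k, C i j k = C j i k) (hx : p.1 ≠ 0) : ricciSymB C 1 1 p =
    (-C 1 1 0 - C 0 1 1 * C 1 1 0 + C 0 1 0 * C 1 1 1 - C 0 1 0^2 + C 0 0 0 * C 1 1 0)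
      / (p.1 * p.1) := by
  simp only [ricciSymB, ricci11 hC hx]; ring

end ricci

lemma soliton_log (C : Fin 2 → Fin 2 → Fin 2 → ℝ) (hC : ∀ i j k, C i j k = C j i k) (γ : ℝ)
    (h1 : γ * (1 + C 0 0 0)
      = C 0 1 1 - C 0 1 1^2 + C 0 0 1 * C 1 1 1 - C 0 0 1 * C 0 1 0 + C 0 0 0 * C 0 1 1)
    (h2 : γ * C 0 1 0 = (C 1 1 1 - C 0 1 0)/2 + C 0 1 0 * C 0 1 1 - C 0 0 1 * C 1 1 0)
    (h3 : γ * C 1 1 0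
      = -C 1 1 0 - C 0 1 1 * C 1 1 0 + C 0 1 0 * C 1 1 1 - C 0 1 0^2 + C 0 0 0 * C 1 1 0) :
    IsSolitonB C (fun q => γ * Real.log q.1) := by
  intro i j p hp
  have hx : p.1 ≠ 0 := ne_of_gt hp
  have hpM : p ∈ MB := hp
  have h0 : ∀ q ∈ MB, pd 0 (fun q : ℝ × ℝ => γ * Real.log q.1) q = γ / q.1 :=
    fun q hq => (hasPd_log (ne_of_gt hq) γ).pd0
  have h1' : ∀ q ∈ MB, pd 1 (fun q : ℝ × ℝ => γ * Real.log q.1) q = (fun _ => (0:ℝ)) q :=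
    fun q hq => (hasPd_log (ne_of_gt hq) γ).pd1
  have h0' : ∀ q ∈ MB, pd 0 (fun q : ℝ × ℝ => γ * Real.log q.1) q = (fun q : ℝ × ℝ => γ / q.1) q :=
    h0
  have hd00 : pd 0 (pd 0 (fun q : ℝ × ℝ => γ * Real.log q.1)) p = -(γ / (p.1 * p.1)) := by
    rw [pd_congr_on MB_open hpM h0' 0, pd0_div hx]
  have hd10 : pd 1 (pd 0 (fun q : ℝ × ℝ => γ * Real.log q.1)) p = 0 := by
    rw [pd_congr_on MB_open hpM h0' 1, pd1_div hx]
  have hd01 : pd 0 (pd 1 (fun q : ℝ × ℝ => γ * Real.log q.1)) p = 0 := by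
    rw [pd_congr_on MB_open hpM h1' 0, (hasPd_const 0 p).pd0]
  have hd11 : pd 1 (pd 1 (fun q : ℝ × ℝ => γ * Real.log q.1)) p = 0 := by
    rw [pd_congr_on MB_open hpM h1' 1, (hasPd_const 0 p).pd1]
  have hcase : ∀ m : Fin 2, m = 0 ∨ m = 1 := by decide
  rcases hcase i with rfl | rfl <;> rcases hcase j with rfl | rfl
  · simp only [hessB, Fin.sum_univ_two, GammaB, hd00, h0 p hpM, h1' p hpM,
      ricciSym00 hC hx]
    field_simp
    linear_combination (-1) * h1
  · simp only [hessB, Fin.sum_univ_two, GammaB, hd01, h0 p hpM, h1' p hpM,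
      ricciSym01 hC hx]
    field_simp
    linear_combination (-2) * h2
  · simp only [hessB, Fin.sum_univ_two, GammaB, hd10, h0 p hpM, h1' p hpM, hC 1 0,
      ricciSym10 hC hx]
    field_simp
    linear_combination (-2) * h2
  · simp only [hessB, Fin.sum_univ_two, GammaB, hd11, h0 p hpM, h1' p hpM,
      ricciSym11 hC hx]
    field_simp
    linear_combination (-1) * h3


/-- if a non-flat Type B connection admits an affine gradient Ricci soliton,
then either `C₁₂¹ = C₂₂¹ = C₂₂² = 0`, or some function `a·log(x¹)` is an affine gradient
Ricci soliton. -/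
theorem stmt18 (C : Fin 2 → Fin 2 → Fin 2 → ℝ)
    (hC : ∀ i j k, C i j k = C j i k)
    (hρ : ¬ ∀ p : ℝ × ℝ, 0 < p.1 → ∀ j k : Fin 2, ricciB C j k p = 0)
    (f : ℝ × ℝ → ℝ) (hf : ContDiffOn ℝ (⊤ : ℕ∞) f MB)
    (hsol : IsSolitonB C f) :
    (C 0 1 0 = 0 ∧ C 1 1 0 = 0 ∧ C 1 1 1 = 0) ∨
    (∃ a : ℝ, IsSolitonB C (fun q => a * Real.log q.1)) := by
    classical
  obtain ⟨a, ha⟩ : ∃ x, C 0 0 0 = x := ⟨_, rfl⟩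
  obtain ⟨b, hb⟩ : ∃ x, C 0 0 1 = x := ⟨_, rfl⟩
  obtain ⟨c, hc⟩ : ∃ x, C 0 1 0 = x := ⟨_, rfl⟩
  obtain ⟨d, hd⟩ : ∃ x, C 0 1 1 = x := ⟨_, rfl⟩
  obtain ⟨e, he⟩ : ∃ x, C 1 1 0 = x := ⟨_, rfl⟩
  obtain ⟨g, hg⟩ : ∃ x, C 1 1 1 = x := ⟨_, rfl⟩
  rw [hc, he, hg]
  have hcase : ∀ m : Fin 2, m = 0 ∨ m = 1 := by decide
  have hp0 : ((1:ℝ),(0:ℝ)) ∈ MB := by simp [MB]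
  obtain ⟨u0, hu0⟩ : ∃ x, pd 0 f ((1:ℝ),(0:ℝ)) = x := ⟨_, rfl⟩
  obtain ⟨v0, hv0⟩ : ∃ x, pd 1 f ((1:ℝ),(0:ℝ)) = x := ⟨_, rfl⟩
  have hasPdu : ∀ p ∈ MB, HasPd (pd 0 f) p (pd 0 (pd 0 f) p) (pd 1 (pd 0 f) p) :=
    fun p hp => hasPd_self (diffAt_of (pd_contDiffOn hf 0) hp)
  have hasPdv : ∀ p ∈ MB, HasPd (pd 1 f) p (pd 0 (pd 1 f) p) (pd 1 (pd 1 f) p) :=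
    fun p hp => hasPd_self (diffAt_of (pd_contDiffOn hf 1) hp)
  -- second-order soliton equations
  have E00 : ∀ p ∈ MB, pd 0 (pd 0 f) p
      = (a * pd 0 f p + b * pd 1 f p) / p.1 - (d - d^2 + b*g - b*c + a*d) / (p.1*p.1) := by
    intro p hp
    have hx : p.1 ≠ 0 := ne_of_gt hp
    have h := hsol 0 0 p hp
    simp only [hessB, Fin.sum_univ_two, GammaB, ricciSym00 hC hx, ha, hb, hc, hd, he, hg] at h
    linear_combination h
  have E10 : ∀ p ∈ MB, pd 1 (pd 0 f) p
      = (c * pd 0 f p + d * pd 1 f p) / p.1 - ((g - c)/2 + c*d - b*e) / (p.1*p.1) := by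
    intro p hp
    have hx : p.1 ≠ 0 := ne_of_gt hp
    have h := hsol 1 0 p hp
    simp only [hessB, Fin.sum_univ_two, GammaB, hC 1 0, ricciSym10 hC hx,
      ha, hb, hc, hd, he, hg] at h
    linear_combination h
  have E01 : ∀ p ∈ MB, pd 0 (pd 1 f) p
      = (c * pd 0 f p + d * pd 1 f p) / p.1 - ((g - c)/2 + c*d - b*e) / (p.1*p.1) := by
    intro p hp
    have hx : p.1 ≠ 0 := ne_of_gt hp
    have h := hsol 0 1 p hp
    simp only [hessB, Fin.sum_univ_two, GammaB, ricciSym01 hC hx, ha, hb, hc, hd, he, hg] at h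
    linear_combination h
  have E11 : ∀ p ∈ MB, pd 1 (pd 1 f) p
      = (e * pd 0 f p + g * pd 1 f p) / p.1 - (-e - d*e + c*g - c^2 + a*e) / (p.1*p.1) := by
    intro p hp
    have hx : p.1 ≠ 0 := ne_of_gt hp
    have h := hsol 1 1 p hp
    simp only [hessB, Fin.sum_univ_two, GammaB, hC 1 0, ricciSym11 hC hx,
      ha, hb, hc, hd, he, hg] at h
    linear_combination h
  -- evaluation of a relation at the base point (1,0)
  have evalp0 : ∀ P Q R : ℝ, (∀ p ∈ MB, P * pd 0 f p + Q * pd 1 f p = R / p.1) →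
      P * u0 + Q * v0 = R := by
    intro P Q R h
    have h' := h _ hp0
    rw [show (((1:ℝ),(0:ℝ)) : ℝ × ℝ).1 = 1 from rfl, div_one, hu0, hv0] at h'
    exact h'
  -- x-derivative of a relation
  have relDx : ∀ P Q R : ℝ, (∀ p ∈ MB, P * pd 0 f p + Q * pd 1 f p = R / p.1) →
      (∀ p ∈ MB, (P*a + Q*c) * pd 0 f p + (P*b + Q*d) * pd 1 f p
        = (P*(d - d^2 + b*g - b*c + a*d) + Q*((g - c)/2 + c*d - b*e) - R) / p.1) := by
    intro P Q R hrel p hp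
    have hx : p.1 ≠ 0 := ne_of_gt hp
    have hL := pd_congr_on MB_open hp hrel 0
    rw [(hasPd_lin (hasPdu p hp) (hasPdv p hp) P Q).pd0, pd0_div hx R] at hL
    rw [E00 p hp, E01 p hp] at hL
    apply mul_left_cancel₀ (inv_ne_zero hx)
    linear_combination hL
  -- y-derivative of a relation
  have relDy : ∀ P Q R : ℝ, (∀ p ∈ MB, P * pd 0 f p + Q * pd 1 f p = R / p.1) →
      (∀ p ∈ MB, (P*c + Q*e) * pd 0 f p + (P*d + Q*g) * pd 1 f p
        = (P*((g - c)/2 + c*d - b*e) + Q*(-e - d*e + c*g - c^2 + a*e)) / p.1) := by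
    intro P Q R hrel p hp
    have hx : p.1 ≠ 0 := ne_of_gt hp
    have hL := pd_congr_on MB_open hp hrel 1
    rw [(hasPd_lin (hasPdu p hp) (hasPdv p hp) P Q).pd1, pd1_div hx R] at hL
    rw [E10 p hp, E11 p hp] at hL
    apply mul_left_cancel₀ (inv_ne_zero hx)
    linear_combination hL
  -- conclusion from explicit gradient
  have ALT2 : ∀ γ : ℝ, γ*(1+a) = (d - d^2 + b*g - b*c + a*d) → γ*c = ((g - c)/2 + c*d - b*e) → γ*e = (-e - d*e + c*g - c^2 + a*e) →
      ((c = 0 ∧ e = 0 ∧ g = 0) ∨ (∃ α : ℝ, IsSolitonB C (fun q => α * Real.log q.1))) := by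
    intro γ h1 h2 h3
    refine Or.inr ⟨γ, soliton_log C hC γ ?_ ?_ ?_⟩
    · simp only [ha, hb, hc, hd, he, hg]; linear_combination h1
    · simp only [ha, hb, hc, hd, he, hg]; linear_combination h2
    · simp only [ha, hb, hc, hd, he, hg]; linear_combination h3
  have m6 : ∀ γ δ : ℝ, (∀ p ∈ MB, pd 0 f p = γ / p.1) → (∀ p ∈ MB, pd 1 f p = δ / p.1) →
      ((c = 0 ∧ e = 0 ∧ g = 0) ∨ (∃ α : ℝ, IsSolitonB C (fun q => α * Real.log q.1))) := by
    intro γ δ hU hV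
    have h1v : pd 1 (pd 0 f) ((1:ℝ),(0:ℝ)) = 0 := by
      rw [pd_congr_on MB_open hp0 hU 1, pd1_div (by norm_num) γ]
    have h0v : pd 0 (pd 0 f) ((1:ℝ),(0:ℝ)) = -(γ/(1*1)) := by
      rw [pd_congr_on MB_open hp0 hU 0, pd0_div (by norm_num) γ]
    have h1w : pd 1 (pd 1 f) ((1:ℝ),(0:ℝ)) = 0 := by
      rw [pd_congr_on MB_open hp0 hV 1, pd1_div (by norm_num) δ]
    have h0w : pd 0 (pd 1 f) ((1:ℝ),(0:ℝ)) = -(δ/(1*1)) := by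
      rw [pd_congr_on MB_open hp0 hV 0, pd0_div (by norm_num) δ]
    have hu' : pd 0 f ((1:ℝ),(0:ℝ)) = γ := by rw [hU _ hp0]; norm_num
    have hv' : pd 1 f ((1:ℝ),(0:ℝ)) = δ := by rw [hV _ hp0]; norm_num
    have e1 := E10 _ hp0
    have e2 := E01 _ hp0
    have e3 := E11 _ hp0
    have e4 := E00 _ hp0
    rw [h1v, hu', hv'] at e1
    rw [h0w, hu', hv'] at e2
    rw [h1w, hu', hv'] at e3
    rw [h0v, hu', hv'] at e4
    norm_num at e1 e2 e3 e4
    have hδ : δ = 0 := by linarith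
    apply ALT2 γ
    · rw [hδ] at e4; linarith
    · rw [hδ] at e1; linarith
    · rw [hδ] at e3; linarith
  -- two independent relations give an explicit gradient
  have L1 : ∀ P Q R P' Q' R' : ℝ, (∀ p ∈ MB, P * pd 0 f p + Q * pd 1 f p = R / p.1) →
      (∀ p ∈ MB, P' * pd 0 f p + Q' * pd 1 f p = R' / p.1) → P*Q' - Q*P' ≠ 0 →
      ((c = 0 ∧ e = 0 ∧ g = 0) ∨ (∃ α : ℝ, IsSolitonB C (fun q => α * Real.log q.1))) := by
    intro P Q R P' Q' R' h1 h2 hdet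
    apply m6 ((R*Q' - R'*Q)/(P*Q' - Q*P')) ((P*R' - P'*R)/(P*Q' - Q*P'))
    · intro p hp
      have hx : p.1 ≠ 0 := ne_of_gt hp
      have g1 := h1 p hp
      have g2 := h2 p hp
      field_simp at g1 g2 ⊢
      linear_combination Q'*g1 - Q*g2
    · intro p hp
      have hx : p.1 ≠ 0 := ne_of_gt hp
      have g1 := h1 p hp
      have g2 := h2 p hp
      field_simp at g1 g2 ⊢
      linear_combination P*g2 - P'*g1
  -- first integrability relation
  have rel1 : ∀ p ∈ MB, (c - c*d + b*e) * pd 0 f p + (d - d^2 + b*g - b*c + a*d) * pd 1 f p = (g - d*g/2 - c + 3*c*d/2 - 3*b*e + a*g/2 - a*c/2) / p.1 := by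
    intro p hp
    have hx : p.1 ≠ 0 := ne_of_gt hp
    have hG1 : ∀ q ∈ MB, pd 0 (pd 0 f) q
        = (fun q : ℝ × ℝ => (a * pd 0 f q + b * pd 1 f q + 0)/q.1 + (-(d - d^2 + b*g - b*c + a*d))/(q.1*q.1)) q := by
      intro q hq
      show pd 0 (pd 0 f) q = (a * pd 0 f q + b * pd 1 f q + 0)/q.1 + (-(d - d^2 + b*g - b*c + a*d))/(q.1*q.1)
      rw [E00 q hq]; ring
    have hG2 : ∀ q ∈ MB, pd 1 (pd 0 f) q
        = (fun q : ℝ × ℝ => (c * pd 0 f q + d * pd 1 f q + 0)/q.1 + (-((g - c)/2 + c*d - b*e))/(q.1*q.1)) q := by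
      intro q hq
      show pd 1 (pd 0 f) q = (c * pd 0 f q + d * pd 1 f q + 0)/q.1 + (-((g - c)/2 + c*d - b*e))/(q.1*q.1)
      rw [E10 q hq]; ring
    have hcl := clairaut (pd_contDiffOn hf 0) hp
    rw [pd_congr_on MB_open hp hG2 0, pd_congr_on MB_open hp hG1 1] at hcl
    rw [(hasPd_master hx (hasPdu p hp) (hasPdv p hp) c d 0 (-((g - c)/2 + c*d - b*e))).pd0] at hcl
    rw [(hasPd_master hx (hasPdu p hp) (hasPdv p hp) a b 0 (-(d - d^2 + b*g - b*c + a*d))).pd1] at hcl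
    rw [E00 p hp, E01 p hp, E10 p hp, E11 p hp] at hcl
    apply mul_left_cancel₀ (mul_ne_zero (inv_ne_zero hx) (inv_ne_zero hx))
    linear_combination -hcl
  -- second integrability relation
  have rel2 : ∀ p ∈ MB, (e + d*e - c*g + c^2 - a*e) * pd 0 f p + (g + c*d - b*e) * pd 1 f p = (-g^2/2 - 2*e - 4*d*e + 3*c*g - 5*c^2/2 + 2*a*e) / p.1 := by
    intro p hp
    have hx : p.1 ≠ 0 := ne_of_gt hp
    have hG1 : ∀ q ∈ MB, pd 0 (pd 1 f) q
        = (fun q : ℝ × ℝ => (c * pd 0 f q + d * pd 1 f q + 0)/q.1 + (-((g - c)/2 + c*d - b*e))/(q.1*q.1)) q := by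
      intro q hq
      show pd 0 (pd 1 f) q = (c * pd 0 f q + d * pd 1 f q + 0)/q.1 + (-((g - c)/2 + c*d - b*e))/(q.1*q.1)
      rw [E01 q hq]; ring
    have hG2 : ∀ q ∈ MB, pd 1 (pd 1 f) q
        = (fun q : ℝ × ℝ => (e * pd 0 f q + g * pd 1 f q + 0)/q.1 + (-(-e - d*e + c*g - c^2 + a*e))/(q.1*q.1)) q := by
      intro q hq
      show pd 1 (pd 1 f) q = (e * pd 0 f q + g * pd 1 f q + 0)/q.1 + (-(-e - d*e + c*g - c^2 + a*e))/(q.1*q.1)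
      rw [E11 q hq]; ring
    have hcl := clairaut (pd_contDiffOn hf 1) hp
    rw [pd_congr_on MB_open hp hG2 0, pd_congr_on MB_open hp hG1 1] at hcl
    rw [(hasPd_master hx (hasPdu p hp) (hasPdv p hp) e g 0 (-(-e - d*e + c*g - c^2 + a*e))).pd0] at hcl
    rw [(hasPd_master hx (hasPdu p hp) (hasPdv p hp) c d 0 (-((g - c)/2 + c*d - b*e))).pd1] at hcl
    rw [E00 p hp, E01 p hp, E10 p hp, E11 p hp] at hcl
    apply mul_left_cancel₀ (mul_ne_zero (inv_ne_zero hx) (inv_ne_zero hx))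
    linear_combination -hcl
  -- reduction relation in the degenerate case
  have relU : ∀ r R : ℝ, (∀ p ∈ MB, r * pd 0 f p + 1 * pd 1 f p = R / p.1) →
      ∀ p ∈ MB, (c - d*r) * pd 0 f p + 0 * pd 1 f p
        = ((c - d*r)*(b*R - (d - d^2 + b*g - b*c + a*d)) - (2 + (a - b*r))*(d*R - ((g - c)/2 + c*d - b*e))) / p.1 := by
    intro r R hbase p hp
    have hx : p.1 ≠ 0 := ne_of_gt hp
    have huv : ∀ q ∈ MB, pd 1 f q = R/q.1 - r * pd 0 f q := by
      intro q hq; linear_combination hbase q hq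
    have hG1 : ∀ q ∈ MB, pd 0 (pd 0 f) q
        = (fun q : ℝ × ℝ => ((a - b*r) * pd 0 f q + 0 * pd 0 f q + 0)/q.1
            + (b*R - (d - d^2 + b*g - b*c + a*d))/(q.1*q.1)) q := by
      intro q hq
      have hxq : q.1 ≠ 0 := ne_of_gt hq
      show pd 0 (pd 0 f) q
        = ((a - b*r) * pd 0 f q + 0 * pd 0 f q + 0)/q.1 + (b*R - (d - d^2 + b*g - b*c + a*d))/(q.1*q.1)
      rw [E00 q hq, huv q hq]; ring
    have hG2 : ∀ q ∈ MB, pd 1 (pd 0 f) q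
        = (fun q : ℝ × ℝ => ((c - d*r) * pd 0 f q + 0 * pd 0 f q + 0)/q.1
            + (d*R - ((g - c)/2 + c*d - b*e))/(q.1*q.1)) q := by
      intro q hq
      have hxq : q.1 ≠ 0 := ne_of_gt hq
      show pd 1 (pd 0 f) q
        = ((c - d*r) * pd 0 f q + 0 * pd 0 f q + 0)/q.1 + (d*R - ((g - c)/2 + c*d - b*e))/(q.1*q.1)
      rw [E10 q hq, huv q hq]; ring
    have hcl := clairaut (pd_contDiffOn hf 0) hp
    rw [pd_congr_on MB_open hp hG2 0, pd_congr_on MB_open hp hG1 1] at hcl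
    rw [(hasPd_master hx (hasPdu p hp) (hasPdu p hp) (c - d*r) 0 0 (d*R - ((g - c)/2 + c*d - b*e))).pd0] at hcl
    rw [(hasPd_master hx (hasPdu p hp) (hasPdu p hp) (a - b*r) 0 0 (b*R - (d - d^2 + b*g - b*c + a*d))).pd1] at hcl
    rw [E00 p hp, E10 p hp] at hcl
    rw [huv p hp] at hcl
    apply mul_left_cancel₀ (mul_ne_zero (inv_ne_zero hx) (inv_ne_zero hx))
    linear_combination -hcl
  -- main analysis from a single nonzero relation row
  have main : ∀ r0 s0 R0 : ℝ, (∀ p ∈ MB, r0 * pd 0 f p + s0 * pd 1 f p = R0 / p.1) →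
      ¬(r0 = 0 ∧ s0 = 0) →
      ((c = 0 ∧ e = 0 ∧ g = 0) ∨ (∃ α : ℝ, IsSolitonB C (fun q => α * Real.log q.1))) := by
    intro r0 s0 R0 hrow hne
    by_cases hs : s0 = 0
    · -- row (1, 0)
      have hr : r0 ≠ 0 := fun h => hne ⟨h, hs⟩
      have hbase : ∀ p ∈ MB, 1 * pd 0 f p + 0 * pd 1 f p = (R0/r0) / p.1 := by
        intro p hp
        have hx : p.1 ≠ 0 := ne_of_gt hp
        have h := hrow p hp
        rw [hs, eq_div_iff hx] at h
        rw [div_div, eq_div_iff (mul_ne_zero hr hx)]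
        linear_combination h
      obtain ⟨R, hR⟩ : ∃ x, R0/r0 = x := ⟨_, rfl⟩
      rw [hR] at hbase
      have hDx := relDx 1 0 R hbase
      by_cases hb0 : b = 0
      · have h1 := evalp0 _ _ _ hbase
        have h2 := evalp0 _ _ _ hDx
        rw [hb0] at h2
        have hAR : (d - d^2 + b*g - b*c + a*d) = (1+a)*R := by linear_combination -h2 + a*h1 + (g - c)*hb0
        have hDy := relDy 1 0 R hbase
        by_cases hd0 : d = 0
        · have h3 := evalp0 _ _ _ hDy
          rw [hd0] at h3
          have hBR : ((g - c)/2 + c*d - b*e) = c*R := by linear_combination -h3 + c*h1 + c*hd0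
          have husol : ∀ q ∈ MB, pd 0 f q = R/q.1 := by
            intro q hq; linear_combination hbase q hq
          have hw0 : ∀ q ∈ MB, pd 0 (pd 1 f) q = (fun _ : ℝ × ℝ => (0:ℝ)) q := by
            intro q hq
            have hxq : q.1 ≠ 0 := ne_of_gt hq
            show pd 0 (pd 1 f) q = 0
            rw [E01 q hq, husol q hq, hBR, hd0]
            ring
          have hw1 : ∀ q ∈ MB, pd 1 (pd 1 f) q
              = (fun q : ℝ × ℝ => (g * pd 1 f q + 0 * pd 1 f q + 0)/q.1
                  + (e*R - (-e - d*e + c*g - c^2 + a*e))/(q.1*q.1)) q := by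
            intro q hq
            have hxq : q.1 ≠ 0 := ne_of_gt hq
            show pd 1 (pd 1 f) q
              = (g * pd 1 f q + 0 * pd 1 f q + 0)/q.1 + (e*R - (-e - d*e + c*g - c^2 + a*e))/(q.1*q.1)
            rw [E11 q hq, husol q hq]; ring
          have relg : ∀ p ∈ MB, 0 * pd 0 f p + g * pd 1 f p = (-2*(e*R - (-e - d*e + c*g - c^2 + a*e))) / p.1 := by
            intro p hp
            have hx : p.1 ≠ 0 := ne_of_gt hp
            have hcl := clairaut (pd_contDiffOn hf 1) hp
            rw [pd_congr_on MB_open hp hw1 0, pd_congr_on MB_open hp hw0 1] at hcl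
            rw [(hasPd_master hx (hasPdv p hp) (hasPdv p hp) g 0 0 (e*R - (-e - d*e + c*g - c^2 + a*e))).pd0] at hcl
            rw [(hasPd_const 0 p).pd1] at hcl
            have hw0' : pd 0 (pd 1 f) p = 0 := hw0 p hp
            rw [hw0'] at hcl
            apply mul_left_cancel₀ (mul_ne_zero (inv_ne_zero hx) (inv_ne_zero hx))
            linear_combination -hcl
          by_cases hg0 : g = 0
          · have h4 := evalp0 _ _ _ relg
            have hDR : (-e - d*e + c*g - c^2 + a*e) = e*R := by linear_combination (-1/2)*h4 + (v0/2)*hg0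
            apply ALT2 R
            · linear_combination -hAR
            · linear_combination -hBR
            · linear_combination -hDR
          · exact L1 1 0 R 0 g (-2*(e*R - (-e - d*e + c*g - c^2 + a*e))) hbase relg (by simpa using hg0)
        · exact L1 1 0 R (1*c + 0*e) (1*d + 0*g) (1*((g - c)/2 + c*d - b*e) + 0*(-e - d*e + c*g - c^2 + a*e)) hbase hDy
            (by simpa using hd0)
      · exact L1 1 0 R (1*a + 0*c) (1*b + 0*d) (1*(d - d^2 + b*g - b*c + a*d) + 0*((g - c)/2 + c*d - b*e) - R) hbase hDx
          (by simpa using hb0)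
    · -- row (r, 1)
      have hbase : ∀ p ∈ MB, (r0/s0) * pd 0 f p + 1 * pd 1 f p = (R0/s0) / p.1 := by
        intro p hp
        have hx : p.1 ≠ 0 := ne_of_gt hp
        have h := hrow p hp
        field_simp at h ⊢
        linear_combination h
      obtain ⟨r, hr⟩ : ∃ x, r0/s0 = x := ⟨_, rfl⟩
      obtain ⟨R, hR⟩ : ∃ x, R0/s0 = x := ⟨_, rfl⟩
      rw [hr, hR] at hbase
      have hDx := relDx r 1 R hbase
      by_cases hind : r*(r*b + 1*d) - 1*(r*a + 1*c) ≠ 0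
      · exact L1 r 1 R (r*a + 1*c) (r*b + 1*d) (r*(d - d^2 + b*g - b*c + a*d) + 1*((g - c)/2 + c*d - b*e) - R) hbase hDx
          hind
      · push_neg at hind
        have hlam : r*a + c = r*(r*b + d) := by linarith
        have h1 := evalp0 _ _ _ hbase
        have h2 := evalp0 _ _ _ hDx
        have hRx : r*(d - d^2 + b*g - b*c + a*d) + ((g - c)/2 + c*d - b*e) - R = (r*b + d)*R := by
          linear_combination -h2 + u0*hlam + (r*b + d)*h1
        have hDy := relDy r 1 R hbase
        by_cases hind2 : r*(r*d + 1*g) - 1*(r*c + 1*e) ≠ 0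
        · exact L1 r 1 R (r*c + 1*e) (r*d + 1*g) (r*((g - c)/2 + c*d - b*e) + 1*(-e - d*e + c*g - c^2 + a*e)) hbase hDy
            hind2
        · push_neg at hind2
          have hmu : r*c + e = r*(r*d + g) := by linarith
          have h3 := evalp0 _ _ _ hDy
          have hRy : r*((g - c)/2 + c*d - b*e) + (-e - d*e + c*g - c^2 + a*e) = (r*d + g)*R := by
            linear_combination -h3 + u0*hmu + (r*d + g)*h1
          have hrelu := relU r R hbase
          by_cases htau : c - d*r ≠ 0
          · exact L1 (c - d*r) 0 ((c - d*r)*(b*R - (d - d^2 + b*g - b*c + a*d)) - (2 + (a - b*r))*(d*R - ((g - c)/2 + c*d - b*e)))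
              r 1 R hrelu hbase (by simpa using htau)
          · push_neg at htau
            by_cases hr0 : r = 0
            · have hc0 : c = 0 := by rw [hr0] at htau; linarith
              have he0 : e = 0 := by rw [hr0] at hmu; linarith
              have hBB' : ((g - c)/2 + c*d - b*e) = (1+d)*R := by rw [hr0] at hRx; linarith
              have hDD' : (-e - d*e + c*g - c^2 + a*e) = g*R := by rw [hr0] at hRy; linarith
              have hgR : g*R = 0 := by
                have : (-e - d*e + c*g - c^2 + a*e) = 0 := by rw [hc0, he0]; ring
                linarith
              have hg2 : g = 2*(1+d)*R := by
                have : ((g - c)/2 + c*d - b*e) = g/2 := by rw [hc0, he0]; ring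
                linarith
              have hgz : g = 0 := by
                rcases mul_eq_zero.mp hgR with h | h
                · exact h
                · rw [h] at hg2; simpa using hg2
              exact Or.inl ⟨hc0, he0, hgz⟩
            · have h5 : r*(a - b*r) = 0 := by linear_combination hlam - htau
              have hkap : a - b*r = 0 := by
                rcases mul_eq_zero.mp h5 with h | h
                · exact absurd h hr0
                · exact h
              have h6 := evalp0 _ _ _ hrelu
              rw [htau] at h6
              have hn : d*R - ((g - c)/2 + c*d - b*e) = 0 := by
                have h7 : (2 + (a - b*r))*(d*R - ((g - c)/2 + c*d - b*e)) = 0 := by linarith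
                rw [hkap] at h7
                linarith
              have he' : e = r*g := by linear_combination hmu - r*htau
              have hDD' : (-e - d*e + c*g - c^2 + a*e) = g*R := by linear_combination hRy + r*hn
              apply ALT2 (R/r)
              · rw [div_mul_eq_mul_div, div_eq_iff hr0]
                linear_combination -hRx - hn + R*hkap
              · rw [div_mul_eq_mul_div, div_eq_iff hr0]
                linear_combination R*htau + r*hn
              · rw [div_mul_eq_mul_div, div_eq_iff hr0]
                linear_combination R*he' - r*hDD'
  -- case split on the integrability rows
  by_cases h11 : (c - c*d + b*e) = 0 ∧ (d - d^2 + b*g - b*c + a*d) = 0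
  · by_cases h22 : (e + d*e - c*g + c^2 - a*e) = 0 ∧ (g + c*d - b*e) = 0
    · exfalso
      apply hρ
      intro p hp j k
      have hx : p.1 ≠ 0 := ne_of_gt hp
      rcases hcase j with rfl | rfl <;> rcases hcase k with rfl | rfl
      · rw [ricci00 hC hx]
        simp only [ha, hb, hc, hd, he, hg]
        rw [show d - d^2 + b*g - b*c + a*d = (0:ℝ) by linarith [h11.2]]
        exact zero_div _
      · rw [ricci01 hC hx]
        simp only [ha, hb, hc, hd, he, hg]
        rw [show g + c*d - b*e = (0:ℝ) by linarith [h22.2]]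
        exact zero_div _
      · rw [ricci10 hC hx]
        simp only [ha, hb, hc, hd, he, hg]
        rw [show -c + c*d - b*e = (0:ℝ) by linarith [h11.1]]
        exact zero_div _
      · rw [ricci11 hC hx]
        simp only [ha, hb, hc, hd, he, hg]
        rw [show -e - d*e + c*g - c^2 + a*e = (0:ℝ) by linarith [h22.1]]
        exact zero_div _
    · rcases not_and_or.mp h22 with h | h
      · exact main (e + d*e - c*g + c^2 - a*e) (g + c*d - b*e) (-g^2/2 - 2*e - 4*d*e + 3*c*g - 5*c^2/2 + 2*a*e) rel2 (fun hx => h hx.1)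
      · exact main (e + d*e - c*g + c^2 - a*e) (g + c*d - b*e) (-g^2/2 - 2*e - 4*d*e + 3*c*g - 5*c^2/2 + 2*a*e) rel2 (fun hx => h hx.2)
  · rcases not_and_or.mp h11 with h | h
    · exact main (c - c*d + b*e) (d - d^2 + b*g - b*c + a*d) (g - d*g/2 - c + 3*c*d/2 - 3*b*e + a*g/2 - a*c/2) rel1 (fun hx => h hx.1)
    · exact main (c - c*d + b*e) (d - d^2 + b*g - b*c + a*d) (g - d*g/2 - c + 3*c*d/2 - 3*b*e + a*g/2 - a*c/2) rel1 (fun hx => h hx.2)
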